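/- A typical element K of the space 𝒞 has orthogonal projections of measure zero in every non-vertical direction; that is, the set of K ∈ 𝒞 such that for every unit vector u not parallel to (1,0) the orthogonal projection of K onto the line spanned by u has one-dimensional Lebesgue measure zero is residual in 𝒞. -/

import Mathlib

/-!
For `n : ℕ` and `δ > 0`, the compact sets having a thickening whose projection onto the line
spanned by any unit vector `u` with `|u 1| ≥ 1 / (n + 1)` has measure at most `δ` form an open
set; the theorem follows once these sets are shown to be dense in `𝒞`.

A segment of slope `s` and horizontal length `w` projects in the direction `u` onto an interval of
length `w * |u 0 + s * u 1|`. Hence a finite family of parallel segments of total horizontal length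
`N` has projections of measure about `N * Δ` in all directions with `|u 0 + s * u 1| < Δ`. Any
`K ∈ 𝒞` is close to a family of horizontal segments through the centres of the cells of a fine
grid. Cutting every segment into many short pieces and tilting each piece to a new slope `s'`
moves the family arbitrarily little, keeps its shadow on the x-axis and its total horizontal
length, and makes the projections small in the directions nearly orthogonal to `(1, s')`. Since
the sets where the previously treated slopes are under control are open, doing this for the
finitely many slopes of a compactness cover of the directions yields a set close to `K` with
small projections in all the required directions.
-/

open MeasureTheory Set Metric TopologicalSpace
open scoped ENNReal Real

noncomputable section

abbrev Plane : Type := EuclideanSpace ℝ (Fin 2)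

/-- The point (a, b) of the plane. -/
def pt (a b : ℝ) : Plane := (WithLp.equiv 2 (Fin 2 → ℝ)).symm ![a, b]

/-- The orthogonal projection of `A` onto the line spanned by `u`, as a subset of `ℝ`. -/
def orthProj (u : Plane) (A : Set Plane) : Set ℝ := (fun x => (inner ℝ x u : ℝ)) '' A

/-- The closed unit square `[0,1]²`. -/
def unitSq : Set Plane := {p | p 0 ∈ Icc (0:ℝ) 1 ∧ p 1 ∈ Icc (0:ℝ) 1}

/-- The space `𝒞` of nonempty compact subsets of `[0,1]²` whose projection to the x-axis is all
of `[0,1]`, with the Hausdorff distance. -/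
def specialCompacts : Set (NonemptyCompacts Plane) :=
  {K | (K : Set Plane) ⊆ unitSq ∧ (fun p : Plane => p 0) '' (K : Set Plane) = Icc (0:ℝ) 1}

open scoped Finset

@[simp] lemma pt_apply_zero (a b : ℝ) : pt a b 0 = a := by simp [pt]

@[simp] lemma pt_apply_one (a b : ℝ) : pt a b 1 = b := by simp [pt]

lemma inner_pt (a b : ℝ) (u : Plane) : inner ℝ (pt a b) u = a * u 0 + b * u 1 := by
  simp [PiLp.inner_apply, Fin.sum_univ_two, mul_comm]

lemma dist_eq_sqrt (p q : Plane) : dist p q = √((p 0 - q 0) ^ 2 + (p 1 - q 1) ^ 2) := by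
  simp [EuclideanSpace.dist_eq, Fin.sum_univ_two, Real.dist_eq, sq_abs]

lemma dist_le_abs_add_abs (p q : Plane) : dist p q ≤ |p 0 - q 0| + |p 1 - q 1| := by
  rw [dist_eq_sqrt, Real.sqrt_le_iff]
  refine ⟨by positivity, ?_⟩
  nlinarith [sq_abs (p 0 - q 0), sq_abs (p 1 - q 1), abs_nonneg (p 0 - q 0),
    abs_nonneg (p 1 - q 1)]

lemma dist_eq_abs_of_apply_zero_eq {p q : Plane} (h : p 0 = q 0) : dist p q = |p 1 - q 1| := by
  rw [dist_eq_sqrt, h, sub_self, sq, zero_mul, zero_add, Real.sqrt_sq_eq_abs]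

lemma exists_nat_lt_mem_Icc {h : ℝ} (hh : 0 < h) {M : ℕ} (hM : 0 < M) {x : ℝ}
    (hx : x ∈ Icc 0 (M * h)) : ∃ j < M, x ∈ Icc (j * h) ((j + 1) * h) := by
  have hfloor : (⌊x / h⌋₊ : ℝ) * h ≤ x :=
    (le_div_iff₀ hh).1 (Nat.floor_le (div_nonneg hx.1 hh.le))
  obtain hle | hle := le_total ⌊x / h⌋₊ (M - 1)
  · exact ⟨⌊x / h⌋₊, by omega, hfloor, (div_lt_iff₀ hh).1 (Nat.lt_floor_add_one _) |>.le⟩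
  · refine ⟨M - 1, by omega, ?_, ?_⟩
    · exact le_trans (by gcongr) hfloor
    · rw [Nat.cast_pred hM, sub_add_cancel]
      exact hx.2

def VerticallyNear (β : ℝ) (A B : Set Plane) : Prop :=
  ∀ p ∈ A, ∃ q ∈ B, q 0 = p 0 ∧ |q 1 - p 1| ≤ β

lemma VerticallyNear.mono {β β' : ℝ} {A B : Set Plane} (h : VerticallyNear β A B)
    (hβ : β ≤ β') : VerticallyNear β' A B := fun p hp ↦
  let ⟨q, hq, h0, h1⟩ := h p hp
  ⟨q, hq, h0, h1.trans hβ⟩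

lemma VerticallyNear.image_apply_zero_subset {β : ℝ} {A B : Set Plane}
    (h : VerticallyNear β A B) : (fun p : Plane ↦ p 0) '' A ⊆ (fun p : Plane ↦ p 0) '' B := by
  rintro _ ⟨p, hp, rfl⟩
  obtain ⟨q, hq, h0, -⟩ := h p hp
  exact ⟨q, hq, h0⟩

lemma VerticallyNear.exists_dist_le {β : ℝ} {A B : Set Plane} (h : VerticallyNear β A B) :
    ∀ p ∈ A, ∃ q ∈ B, dist p q ≤ β := fun p hp ↦
  let ⟨q, hq, h0, h1⟩ := h p hp
  ⟨q, hq, by rwa [dist_eq_abs_of_apply_zero_eq h0.symm, abs_sub_comm]⟩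

lemma VerticallyNear.hausdorffDist_le {β : ℝ} {A B : Set Plane} (h : VerticallyNear β A B)
    (h' : VerticallyNear β B A) (hβ : 0 ≤ β) : hausdorffDist A B ≤ β :=
  hausdorffDist_le_of_mem_dist hβ h.exists_dist_le h'.exists_dist_le

/-! ### Open conditions in the Hausdorff metric -/

theorem NonemptyCompacts.isOpen_setOf_exists_thickening {α : Type*} [MetricSpace α]
    {P : Set α → Prop} (hP : ∀ ⦃s t⦄, s ⊆ t → P t → P s) :
    IsOpen {K : NonemptyCompacts α | ∃ η > 0, P (thickening η K)} := by
  rw [Metric.isOpen_iff]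
  rintro K ⟨η, hη, hK⟩
  refine ⟨η / 2, half_pos hη, fun K' hK' ↦ ⟨η / 2, half_pos hη, hP ?_ hK⟩⟩
  have hK'K : (K' : Set α) ⊆ thickening (η / 2) K := by
    rw [mem_ball, NonemptyCompacts.dist_eq] at hK'
    have hfin := hausdorffEDist_ne_top_of_nonempty_of_bounded K'.nonempty K.nonempty
      K'.isCompact.isBounded K.isCompact.isBounded
    intro x hx
    obtain ⟨y, hy, hxy⟩ := exists_dist_lt_of_hausdorffDist_lt hx hK' hfin
    exact mem_thickening_iff.2 ⟨y, hy, hxy⟩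
  calc thickening (η / 2) (K' : Set α) ⊆ thickening (η / 2) (thickening (η / 2) (K : Set α)) :=
        thickening_subset_of_subset _ hK'K
    _ ⊆ thickening η K := (thickening_thickening_subset _ _ _).trans (by rw [add_halves])

def smallProjections (A : Set Plane) (δ : ℝ≥0∞) : Set (NonemptyCompacts Plane) :=
  {K | ∃ η > 0, ∀ u ∈ A, volume (orthProj u (thickening η K)) ≤ δ}

lemma isOpen_smallProjections {A : Set Plane} {δ : ℝ≥0∞} : IsOpen (smallProjections A δ) :=
  NonemptyCompacts.isOpen_setOf_exists_thickening
    (P := fun S ↦ ∀ u ∈ A, volume (orthProj u S) ≤ δ) fun _ _ hst h u hu ↦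
    (measure_mono (image_mono hst)).trans (h u hu)

lemma smallProjections_anti {A B : Set Plane} {δ : ℝ≥0∞} (h : A ⊆ B) :
    smallProjections B δ ⊆ smallProjections A δ :=
  fun _ ⟨η, hη, hB⟩ ↦ ⟨η, hη, fun u hu ↦ hB u (h hu)⟩

lemma inter_smallProjections_subset {A B : Set Plane} {δ : ℝ≥0∞} :
    smallProjections A δ ∩ smallProjections B δ ⊆ smallProjections (A ∪ B) δ := by
  rintro K ⟨⟨η, hη, hA⟩, ⟨η', hη', hB⟩⟩
  refine ⟨min η η', lt_min hη hη', ?_⟩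
  rintro u (hu | hu)
  · exact (measure_mono (image_mono (thickening_mono (min_le_left _ _) _))).trans (hA u hu)
  · exact (measure_mono (image_mono (thickening_mono (min_le_right _ _) _))).trans (hB u hu)

/-! ### Finite families of parallel segments -/

def seg (w s : ℝ) (q : ℝ × ℝ) : Set Plane := (fun t ↦ pt (q.1 + t) (q.2 + s * t)) '' Icc 0 w

def segs (w s : ℝ) (l : Finset (ℝ × ℝ)) : Set Plane := ⋃ q ∈ l, seg w s q

lemma mem_segs {w s : ℝ} {l : Finset (ℝ × ℝ)} {p : Plane} :
    p ∈ segs w s l ↔ ∃ q ∈ l, ∃ t ∈ Icc 0 w, pt (q.1 + t) (q.2 + s * t) = p := by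
  simp only [segs, seg, mem_iUnion₂, mem_image, exists_prop]

lemma isCompact_segs (w s : ℝ) (l : Finset (ℝ × ℝ)) : IsCompact (segs w s l) :=
  l.isCompact_biUnion fun q _ ↦ isCompact_Icc.image <|
    (PiLp.continuous_toLp 2 _).comp (by fun_prop : Continuous fun t : ℝ ↦ ![q.1 + t, q.2 + s * t])

def IsParallelSegments (N s : ℝ) (S : Set Plane) : Prop :=
  ∃ (w : ℝ) (l : Finset (ℝ × ℝ)), 0 < w ∧ #l * w ≤ N ∧ S = segs w s l

lemma IsParallelSegments.exists_nonemptyCompacts {N s : ℝ} {S : Set Plane}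
    (hS : IsParallelSegments N s S) (hne : S.Nonempty) :
    ∃ C : NonemptyCompacts Plane, (C : Set Plane) = S := by
  obtain ⟨w, l, -, -, rfl⟩ := hS
  exact ⟨⟨⟨_, isCompact_segs w s l⟩, hne⟩, rfl⟩

def nearlyOrthogonal (s Δ : ℝ) : Set Plane := {u | ‖u‖ ≤ 1 ∧ |u 0 + s * u 1| < Δ}

lemma orthProj_thickening_seg_subset {u : Plane} (hu : ‖u‖ ≤ 1) {w s Δ : ℝ}
    (h : |u 0 + s * u 1| ≤ Δ) (q : ℝ × ℝ) (η : ℝ) :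
    orthProj u (thickening η (seg w s q)) ⊆ ball (q.1 * u 0 + q.2 * u 1) (w * Δ + η) := by
  rintro _ ⟨x, hx, rfl⟩
  obtain ⟨_, ⟨t, ht, rfl⟩, hxz⟩ := mem_thickening_iff.1 hx
  set z := pt (q.1 + t) (q.2 + s * t)
  have hproj : |inner ℝ x u - inner ℝ z u| < η := by
    rw [← inner_sub_left]
    calc |inner ℝ (x - z) u| ≤ ‖x - z‖ * ‖u‖ := abs_real_inner_le_norm _ _
      _ ≤ ‖x - z‖ := mul_le_of_le_one_right (norm_nonneg _) hu
      _ < η := by rwa [← dist_eq_norm]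
  have hseg : |inner ℝ z u - (q.1 * u 0 + q.2 * u 1)| ≤ w * Δ := by
    rw [inner_pt, show (q.1 + t) * u 0 + (q.2 + s * t) * u 1 - (q.1 * u 0 + q.2 * u 1)
      = t * (u 0 + s * u 1) by ring, abs_mul, abs_of_nonneg ht.1]
    exact mul_le_mul ht.2 h (abs_nonneg _) (ht.1.trans ht.2)
  rw [mem_ball, Real.dist_eq]
  linarith [abs_sub_le (inner ℝ x u) (inner ℝ z u) (q.1 * u 0 + q.2 * u 1)]

lemma volume_orthProj_thickening_segs_le {u : Plane} (hu : ‖u‖ ≤ 1) {w s Δ : ℝ}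
    (h : |u 0 + s * u 1| ≤ Δ) (l : Finset (ℝ × ℝ)) (η : ℝ) :
    volume (orthProj u (thickening η (segs w s l))) ≤ #l * ENNReal.ofReal (2 * (w * Δ + η)) :=
  calc volume (orthProj u (thickening η (segs w s l)))
      ≤ volume (⋃ q ∈ l, ball (q.1 * u 0 + q.2 * u 1) (w * Δ + η)) := by
        refine measure_mono ?_
        simp only [segs, thickening_iUnion, orthProj, image_iUnion]
        exact iUnion₂_mono fun q _ ↦ orthProj_thickening_seg_subset hu h q η
    _ ≤ ∑ q ∈ l, volume (ball (q.1 * u 0 + q.2 * u 1) (w * Δ + η)) :=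
        measure_biUnion_finset_le _ _
    _ = #l * ENNReal.ofReal (2 * (w * Δ + η)) := by simp [Real.volume_ball]

lemma IsParallelSegments.mem_smallProjections {N s Δ δ : ℝ} {C : NonemptyCompacts Plane}
    (hC : IsParallelSegments N s C) (hδ : 2 * Δ * N < δ) :
    C ∈ smallProjections (nearlyOrthogonal s Δ) (ENNReal.ofReal δ) := by
  obtain ⟨w, l, -, hN, hCeq⟩ := hC
  set η := (δ - 2 * Δ * N) / (2 * (#l + 1))
  have hη : η * (2 * (#l + 1)) = δ - 2 * Δ * N := div_mul_cancel₀ _ (by positivity)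
  refine ⟨η, div_pos (by linarith) (by positivity), fun u ⟨hu, hΔ⟩ ↦ ?_⟩
  rw [hCeq]
  refine (volume_orthProj_thickening_segs_le hu hΔ.le l η).trans ?_
  rw [← ENNReal.ofReal_natCast, ← ENNReal.ofReal_mul (by positivity)]
  refine ENNReal.ofReal_le_ofReal ?_
  have hΔ0 : 0 ≤ Δ := (abs_nonneg _).trans hΔ.le
  have hη0 : 0 ≤ η := div_nonneg (by linarith) (by positivity)
  nlinarith [mul_le_mul_of_nonneg_left hN hΔ0]

/-! ### Staircase refinement -/

/-- The points cutting each segment of `segs w s l` into `M` pieces of equal length; they serve as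
the left ends of the pieces once these are tilted to a new slope. -/
def staircase (w s : ℝ) (M : ℕ) (l : Finset (ℝ × ℝ)) : Finset (ℝ × ℝ) :=
  (l ×ˢ Finset.range M).image fun x ↦ (x.1.1 + x.2 * (w / M), x.1.2 + s * (x.2 * (w / M)))

lemma mem_staircase {w s : ℝ} {M : ℕ} {l : Finset (ℝ × ℝ)} {q' : ℝ × ℝ} :
    q' ∈ staircase w s M l ↔
      ∃ q ∈ l, ∃ j < M, (q.1 + j * (w / M), q.2 + s * (j * (w / M))) = q' := by
  simp [staircase, and_assoc]

lemma card_staircase_mul_le {w : ℝ} (hw : 0 ≤ w) (s : ℝ) (M : ℕ) (l : Finset (ℝ × ℝ)) :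
    #(staircase w s M l) * (w / M) ≤ #l * w := by
  rcases M.eq_zero_or_pos with rfl | hM
  · simpa using mul_nonneg (Nat.cast_nonneg _) hw
  have hcard : (#(staircase w s M l) : ℝ) ≤ #l * M := by
    exact_mod_cast Finset.card_image_le.trans_eq (by simp)
  calc #(staircase w s M l) * (w / M) ≤ #l * M * (w / M) := by gcongr
    _ = #l * w := by field_simp

lemma verticallyNear_segs_staircase {w s : ℝ} (s' : ℝ) (M : ℕ) (l : Finset (ℝ × ℝ)) :
    VerticallyNear (|s' - s| * (w / M)) (segs (w / M) s' (staircase w s M l)) (segs w s l) := by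
  rintro _ hp
  obtain ⟨_, hq', t, ht, rfl⟩ := mem_segs.1 hp
  obtain ⟨q, hq, j, hj, rfl⟩ := mem_staircase.1 hq'
  have hM : (0 : ℝ) < M := by exact_mod_cast (Nat.zero_lt_of_lt hj)
  have hjM : (j : ℝ) + 1 ≤ M := by exact_mod_cast hj
  have hw : 0 ≤ w / M := ht.1.trans ht.2
  have htw : j * (w / M) + t ≤ w :=
    calc j * (w / M) + t ≤ (j + 1) * (w / M) := by linarith [ht.2]
      _ ≤ M * (w / M) := by gcongr
      _ = w := by field_simp
  refine ⟨pt (q.1 + (j * (w / M) + t)) (q.2 + s * (j * (w / M) + t)),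
    mem_segs.2 ⟨q, hq, _, ⟨add_nonneg (by positivity) ht.1, htw⟩, rfl⟩, by simp [add_assoc], ?_⟩
  simp only [pt_apply_one]
  rw [show q.2 + s * (j * (w / M) + t) - (q.2 + s * (j * (w / M)) + s' * t) = (s - s') * t by ring,
    abs_mul, abs_sub_comm, abs_of_nonneg ht.1]
  exact mul_le_mul_of_nonneg_left ht.2 (abs_nonneg _)

lemma verticallyNear_staircase_segs {w : ℝ} (hw : 0 < w) (s s' : ℝ) {M : ℕ} (hM : 0 < M)
    (l : Finset (ℝ × ℝ)) :
    VerticallyNear (|s' - s| * (w / M)) (segs w s l) (segs (w / M) s' (staircase w s M l)) := by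
  rintro _ hp
  obtain ⟨q, hq, t, ht, rfl⟩ := mem_segs.1 hp
  have hMR : (0 : ℝ) < M := by exact_mod_cast hM
  obtain ⟨j, hj, hjt⟩ := exists_nat_lt_mem_Icc (div_pos hw hMR) hM
    (by rwa [mul_div_cancel₀ _ hMR.ne'])
  obtain ⟨τ, rfl⟩ : ∃ τ, t = j * (w / M) + τ := ⟨t - j * (w / M), by ring⟩
  have hτ : τ ∈ Icc 0 (w / M) := ⟨by linarith [hjt.1], by linarith [hjt.2]⟩
  refine ⟨pt (q.1 + j * (w / M) + τ) (q.2 + s * (j * (w / M)) + s' * τ),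
    mem_segs.2 ⟨_, mem_staircase.2 ⟨q, hq, j, hj, rfl⟩, τ, hτ, rfl⟩, by simp [add_assoc], ?_⟩
  simp only [pt_apply_one]
  rw [show q.2 + s * (j * (w / M)) + s' * τ - (q.2 + s * (j * (w / M) + τ)) = (s' - s) * τ by ring,
    abs_mul, abs_of_nonneg hτ.1]
  exact mul_le_mul_of_nonneg_left hτ.2 (abs_nonneg _)

lemma IsParallelSegments.exists_verticallyNear {N s : ℝ} {S : Set Plane}
    (hS : IsParallelSegments N s S) (s' : ℝ) {β : ℝ} (hβ : 0 < β) :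
    ∃ S', IsParallelSegments N s' S' ∧ VerticallyNear β S' S ∧ VerticallyNear β S S' := by
  obtain ⟨w, l, hw, hN, rfl⟩ := hS
  set M := ⌈|s' - s| * w / β⌉₊ + 1
  have hM : 0 < M := Nat.succ_pos _
  have hMβ : |s' - s| * (w / M) ≤ β := by
    rw [← mul_div_assoc, div_le_iff₀ (by positivity), mul_comm β]
    exact (div_le_iff₀ hβ).1 ((Nat.le_ceil _).trans (by simp [M]))
  exact ⟨_, ⟨w / M, staircase w s M l, by positivity, (card_staircase_mul_le hw.le s M l).trans hN,
    rfl⟩, (verticallyNear_segs_staircase s' M l).mono hMβ,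
    (verticallyNear_staircase_segs hw s s' hM l).mono hMβ⟩

lemma IsParallelSegments.exists_dist_lt {N s Δ δ r : ℝ} {C : NonemptyCompacts Plane}
    (hC : IsParallelSegments N s C) (s' : ℝ) (hr : 0 < r) (hδ : 2 * Δ * N < δ) :
    ∃ C' : NonemptyCompacts Plane, dist C' C < r ∧ IsParallelSegments N s' C' ∧
      (fun p : Plane ↦ p 0) '' C' = (fun p : Plane ↦ p 0) '' C ∧
      C' ∈ smallProjections (nearlyOrthogonal s' Δ) (ENNReal.ofReal δ) := by
  obtain ⟨S, hS, hSC, hCS⟩ := hC.exists_verticallyNear s' (half_pos hr)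
  obtain ⟨p, hp⟩ := C.nonempty
  obtain ⟨q, hq, -⟩ := hCS p hp
  obtain ⟨C', rfl⟩ := hS.exists_nonemptyCompacts ⟨q, hq⟩
  refine ⟨C', ?_, hS, hSC.image_apply_zero_subset.antisymm hCS.image_apply_zero_subset,
    hS.mem_smallProjections hδ⟩
  rw [NonemptyCompacts.dist_eq]
  exact (hSC.hausdorffDist_le hCS (half_pos hr).le).trans_lt (half_lt_self hr)

lemma exists_mem_smallProjections_biUnion {O : Set (NonemptyCompacts Plane)} (hO : IsOpen O)
    {N s₀ Δ δ : ℝ} {C₀ : NonemptyCompacts Plane} (hC₀ : C₀ ∈ O)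
    (hseg : IsParallelSegments N s₀ C₀) (hδ : 2 * Δ * N < δ) (T : Finset ℝ) :
    ∃ C ∈ O, (fun p : Plane ↦ p 0) '' C = (fun p : Plane ↦ p 0) '' C₀ ∧
      C ∈ smallProjections (⋃ s ∈ T, nearlyOrthogonal s Δ) (ENNReal.ofReal δ) := by
  classical
  suffices ∃ C ∈ O ∩ smallProjections (⋃ s ∈ T, nearlyOrthogonal s Δ) (ENNReal.ofReal δ),
      (∃ s, IsParallelSegments N s C) ∧ (fun p : Plane ↦ p 0) '' C = (fun p : Plane ↦ p 0) '' C₀ by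
    obtain ⟨C, ⟨hCO, hC⟩, -, hx⟩ := this
    exact ⟨C, hCO, hx, hC⟩
  induction T using Finset.induction_on with
  | empty => exact ⟨C₀, ⟨hC₀, 1, one_pos, by simp⟩, ⟨s₀, hseg⟩, rfl⟩
  | insert s T _ ih =>
    obtain ⟨C, hC, ⟨s₁, hseg₁⟩, hx⟩ := ih
    obtain ⟨r, hr, hball⟩ := Metric.isOpen_iff.1 (hO.inter isOpen_smallProjections) C hC
    obtain ⟨C', hC'C, hseg', hx', hC's⟩ := hseg₁.exists_dist_lt s hr hδ
    obtain ⟨hC'O, hC'T⟩ := hball hC'C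
    refine ⟨C', ⟨hC'O, ?_⟩, ⟨s, hseg'⟩, hx'.trans hx⟩
    rw [Finset.set_biUnion_insert]
    exact inter_smallProjections_subset ⟨hC's, hC'T⟩

lemma exists_finset_subset_biUnion_nearlyOrthogonal {A : Set Plane} (hA : IsCompact A)
    (hA₁ : ∀ u ∈ A, u 1 ≠ 0) (hA₂ : ∀ u ∈ A, ‖u‖ ≤ 1) {Δ : ℝ} (hΔ : 0 < Δ) :
    ∃ T : Finset ℝ, A ⊆ ⋃ s ∈ T, nearlyOrthogonal s Δ := by
  obtain ⟨T, hT⟩ := hA.elim_finite_subcover (fun s : ℝ ↦ {u : Plane | |u 0 + s * u 1| < Δ})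
    (fun s ↦ isOpen_lt (by fun_prop) continuous_const)
    (fun u hu ↦ mem_iUnion.2 ⟨-u 0 / u 1, by simpa [div_mul_cancel₀ _ (hA₁ u hu)] using hΔ⟩)
  refine ⟨T, fun u hu ↦ ?_⟩
  obtain ⟨s, hs, hus⟩ := mem_iUnion₂.1 (hT hu)
  exact mem_iUnion₂.2 ⟨s, hs, hA₂ u hu, hus⟩

/-! ### Approximation and density -/

section Grid

variable (n : ℕ)

def gridCell (i j : ℕ) : Set Plane :=
  {p | p 0 ∈ Icc (i * (n : ℝ)⁻¹) ((i + 1) * (n : ℝ)⁻¹) ∧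
    p 1 ∈ Icc (j * (n : ℝ)⁻¹) ((j + 1) * (n : ℝ)⁻¹)}

open Classical in
/-- Left ends of the horizontal segments through the centres of the grid cells that meet `K`. -/
def gridStarts (K : Set Plane) : Finset (ℝ × ℝ) :=
  ((Finset.range n ×ˢ Finset.range n).filter fun ij ↦ (K ∩ gridCell n ij.1 ij.2).Nonempty).image
    fun ij ↦ (ij.1 * (n : ℝ)⁻¹, (ij.2 + 1 / 2) * (n : ℝ)⁻¹)

variable {n} {K : Set Plane}

lemma exists_mem_gridCell (hn : 0 < n) {p : Plane} (hp : p ∈ unitSq) :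
    ∃ i < n, ∃ j < n, p ∈ gridCell n i j := by
  have hnh : (n : ℝ) * (n : ℝ)⁻¹ = 1 := mul_inv_cancel₀ (by positivity)
  obtain ⟨i, hi, hpi⟩ := exists_nat_lt_mem_Icc (by positivity) hn (hnh ▸ hp.1)
  obtain ⟨j, hj, hpj⟩ := exists_nat_lt_mem_Icc (by positivity) hn (hnh ▸ hp.2)
  exact ⟨i, hi, j, hj, hpi, hpj⟩

lemma exists_of_mem_segs_gridStarts {z : Plane} (hz : z ∈ segs (n : ℝ)⁻¹ 0 (gridStarts n K)) :
    ∃ i < n, ∃ j < n, (K ∩ gridCell n i j).Nonempty ∧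
      ∃ t ∈ Icc 0 (n : ℝ)⁻¹, z = pt (i * (n : ℝ)⁻¹ + t) ((j + 1 / 2) * (n : ℝ)⁻¹) := by
  obtain ⟨_, hq, t, ht, rfl⟩ := mem_segs.1 hz
  simp only [gridStarts, Finset.mem_image, Finset.mem_filter, Finset.mem_product,
    Finset.mem_range] at hq
  obtain ⟨⟨i, j⟩, ⟨⟨hi, hj⟩, hK⟩, rfl⟩ := hq
  exact ⟨i, hi, j, hj, hK, t, ht, by simp⟩

lemma segs_gridStarts_subset :
    segs (n : ℝ)⁻¹ 0 (gridStarts n K) ⊆ {p | p 0 ∈ Icc 0 1 ∧ p 1 ∈ Ioo 0 1} := by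
  intro z hz
  obtain ⟨i, hi, j, hj, -, t, ht, rfl⟩ := exists_of_mem_segs_gridStarts hz
  have hn : (0 : ℝ) < n := by exact_mod_cast Nat.zero_lt_of_lt hi
  have hin : (i : ℝ) + 1 ≤ n := by exact_mod_cast hi
  have hjn : (j : ℝ) + 1 ≤ n := by exact_mod_cast hj
  have hnn : (n : ℝ) * (n : ℝ)⁻¹ = 1 := mul_inv_cancel₀ hn.ne'
  have hn' : 0 < (n : ℝ)⁻¹ := inv_pos.2 hn
  simp only [mem_ofPred_eq, pt_apply_zero, pt_apply_one, mem_Icc, mem_Ioo]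
  refine ⟨⟨by nlinarith [ht.1], by nlinarith [ht.2]⟩, by positivity, by nlinarith⟩

lemma verticallyNear_gridStarts (hn : 0 < n) (hK : K ⊆ unitSq) :
    VerticallyNear (n : ℝ)⁻¹ K (segs (n : ℝ)⁻¹ 0 (gridStarts n K)) := by
  intro p hp
  obtain ⟨i, hi, j, hj, hpi, hpj⟩ := exists_mem_gridCell hn (hK hp)
  set t := p 0 - i * (n : ℝ)⁻¹
  have ht : t ∈ Icc 0 (n : ℝ)⁻¹ := ⟨by linarith [hpi.1], by linarith [hpi.2]⟩
  refine ⟨pt (i * (n : ℝ)⁻¹ + t) ((j + 1 / 2) * (n : ℝ)⁻¹ + 0 * t),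
    mem_segs.2 ⟨(i * (n : ℝ)⁻¹, (j + 1 / 2) * (n : ℝ)⁻¹), ?_, t, ht, rfl⟩, by simp [t], ?_⟩
  · simp only [gridStarts, Finset.mem_image, Finset.mem_filter, Finset.mem_product,
      Finset.mem_range]
    exact ⟨(i, j), ⟨⟨hi, hj⟩, p, hp, hpi, hpj⟩, rfl⟩
  · simp only [pt_apply_one, zero_mul, add_zero, abs_le]
    constructor <;> linarith [hpj.1, hpj.2, inv_nonneg.2 (n.cast_nonneg (α := ℝ))]

lemma exists_dist_le_of_mem_segs_gridStarts {z : Plane}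
    (hz : z ∈ segs (n : ℝ)⁻¹ 0 (gridStarts n K)) : ∃ p ∈ K, dist z p ≤ 2 * (n : ℝ)⁻¹ := by
  obtain ⟨i, -, j, -, ⟨p, hp, hpi, hpj⟩, t, ht, rfl⟩ := exists_of_mem_segs_gridStarts hz
  refine ⟨p, hp, (dist_le_abs_add_abs _ _).trans ?_⟩
  simp only [pt_apply_zero, pt_apply_one]
  have h₁ : |i * (n : ℝ)⁻¹ + t - p 0| ≤ (n : ℝ)⁻¹ :=
    abs_le.2 ⟨by linarith [hpi.2, ht.1], by linarith [hpi.1, ht.2]⟩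
  have h₂ : |(j + 1 / 2) * (n : ℝ)⁻¹ - p 1| ≤ (n : ℝ)⁻¹ :=
    abs_le.2 ⟨by linarith [hpj.2, ht.1, ht.2], by linarith [hpj.1, ht.1, ht.2]⟩
  linarith

end Grid

lemma exists_isParallelSegments_hausdorffDist_lt {K : Set Plane} (hK : K ⊆ unitSq)
    (hKx : (fun p : Plane ↦ p 0) '' K = Icc 0 1) {ε : ℝ} (hε : 0 < ε) :
    ∃ N S, IsParallelSegments N 0 S ∧ S ⊆ {p : Plane | p 1 ∈ Ioo 0 1} ∧
      (fun p : Plane ↦ p 0) '' S = Icc 0 1 ∧ hausdorffDist S K < ε := by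
  obtain ⟨n, hn⟩ := exists_nat_gt (2 / ε)
  have hn0 : (0 : ℝ) < n := (by positivity : 0 < 2 / ε).trans hn
  have hS : segs (n : ℝ)⁻¹ 0 (gridStarts n K) ⊆ _ := segs_gridStarts_subset
  have hKS := verticallyNear_gridStarts (by exact_mod_cast hn0) hK
  refine ⟨_, _, ⟨_, gridStarts n K, by positivity, le_rfl, rfl⟩, fun z hz ↦ (hS hz).2,
    subset_antisymm ?_ (hKx ▸ hKS.image_apply_zero_subset), ?_⟩
  · rintro _ ⟨z, hz, rfl⟩
    exact (hS hz).1
  · refine (hausdorffDist_le_of_mem_dist (by positivity)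
      (fun z hz ↦ exists_dist_le_of_mem_segs_gridStarts hz)
      (hKS.mono (by linarith [inv_pos.2 hn0])).exists_dist_le).trans_lt ?_
    rwa [← div_eq_mul_inv, div_lt_iff₀ hn0, mul_comm, ← div_lt_iff₀ hε]

lemma exists_mem_specialCompacts_mem_smallProjections {K : NonemptyCompacts Plane}
    (hK : K ∈ specialCompacts) {ε : ℝ} (hε : 0 < ε) {A : Set Plane} (hA : IsCompact A)
    (hA₁ : ∀ u ∈ A, u 1 ≠ 0) (hA₂ : ∀ u ∈ A, ‖u‖ ≤ 1) {δ : ℝ} (hδ : 0 < δ) :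
    ∃ C ∈ specialCompacts, dist C K < ε ∧ C ∈ smallProjections A (ENNReal.ofReal δ) := by
  obtain ⟨N, S, hS, hSstrip, hSx, hSK⟩ := exists_isParallelSegments_hausdorffDist_lt hK.1 hK.2 hε
  obtain ⟨C₀, rfl⟩ := hS.exists_nonemptyCompacts
    (Nonempty.of_image (hSx ▸ nonempty_Icc.2 zero_le_one))
  set Δ := δ / (2 * (|N| + 1))
  have hΔ : 0 < Δ := by positivity
  have hΔN : 2 * Δ * N < δ := by
    have : 2 * Δ * (|N| + 1) = δ := by simp only [Δ]; field_simp
    nlinarith [le_abs_self N]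
  obtain ⟨T, hT⟩ := exists_finset_subset_biUnion_nearlyOrthogonal hA hA₁ hA₂ hΔ
  have hO : IsOpen (ball K ε ∩ {C | (C : Set Plane) ⊆ {p : Plane | p 1 ∈ Ioo 0 1}}) :=
    isOpen_ball.inter <|
      NonemptyCompacts.isOpen_subsets_of_isOpen (isOpen_Ioo.preimage (by fun_prop))
  obtain ⟨C, ⟨hCK, hCstrip⟩, hCx, hC⟩ := exists_mem_smallProjections_biUnion hO
    ⟨by rwa [mem_ball, NonemptyCompacts.dist_eq], hSstrip⟩ hS hΔN T
  refine ⟨C, ⟨fun p hp ↦ ⟨?_, Ioo_subset_Icc_self (hCstrip hp)⟩, hCx.trans hSx⟩, hCK,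
    smallProjections_anti hT hC⟩
  rw [← hSx, ← hCx]
  exact mem_image_of_mem _ hp

lemma dense_smallProjections {A : Set Plane} (hA : IsCompact A) (hA₁ : ∀ u ∈ A, u 1 ≠ 0)
    (hA₂ : ∀ u ∈ A, ‖u‖ ≤ 1) {δ : ℝ} (hδ : 0 < δ) :
    Dense {K : specialCompacts | K.1 ∈ smallProjections A (ENNReal.ofReal δ)} :=
  Metric.dense_iff.2 fun K _ hr ↦
    let ⟨C, hC, hCK, hCA⟩ := exists_mem_specialCompacts_mem_smallProjections K.2 hr hA hA₁ hA₂ hδ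
    ⟨⟨C, hC⟩, hCK, hCA⟩

/-- A typical element of `𝒞` has orthogonal projections of Lebesgue measure zero in every
non-vertical direction (i.e. onto the line spanned by every unit vector not parallel to
`(1,0)`). -/
theorem typical_projections_null :
    {K : specialCompacts |
        ∀ u : Plane, ‖u‖ = 1 → (¬ ∃ t : ℝ, u = t • pt 1 0) →
          volume (orthProj u (K.1 : Set Plane)) = 0} ∈ residual specialCompacts := by
  set A : ℕ → Set Plane := fun n ↦ sphere 0 1 ∩ {u | 1 / (n + 1) ≤ |u 1|}
  have hres (n m : ℕ) : {K : specialCompacts |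
      K.1 ∈ smallProjections (A n) (ENNReal.ofReal (1 / (m + 1)))} ∈ residual specialCompacts := by
    refine residual_of_dense_open (isOpen_smallProjections.preimage continuous_subtype_val)
      (dense_smallProjections ?_ (fun u hu ↦ ?_) (fun u hu ↦ ?_) (by positivity))
    · exact (isCompact_sphere 0 1).inter_right (isClosed_le continuous_const (by fun_prop))
    · exact abs_pos.1 ((by positivity : (0 : ℝ) < 1 / (n + 1)).trans_le hu.2)
    · exact (mem_sphere_zero_iff_norm.1 hu.1).le
  filter_upwards [countable_iInter_mem.2 fun n ↦ countable_iInter_mem.2 (hres n)]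
    with K hK u hu hpar
  have hu₁ : u 1 ≠ 0 := fun h ↦ hpar ⟨u 0, by ext i; fin_cases i <;> simp [h]⟩
  obtain ⟨n, hn⟩ := exists_nat_one_div_lt (abs_pos.2 hu₁)
  have hle (m : ℕ) : volume (orthProj u K.1) ≤ ENNReal.ofReal (1 / (m + 1)) := by
    obtain ⟨η, hη, hK⟩ := mem_iInter₂.1 hK n m
    exact (measure_mono (image_mono (self_subset_thickening hη _))).trans
      (hK u ⟨mem_sphere_zero_iff_norm.2 hu, hn.le⟩)
  have hlim := ENNReal.tendsto_ofReal tendsto_one_div_add_atTop_nhds_zero_nat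
  rw [ENNReal.ofReal_zero] at hlim
  exact le_antisymm (ge_of_tendsto' hlim hle) zero_le
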